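/- A group whose presentation has all generators expressible, modulo the relations, as products of commutators has trivial abelianization. Concretely: the abelianization of the group π₁(X_K) described by the presentation in which a⁻¹b = s, b⁻¹aba⁻¹ = t, d = e⁻¹f, y = f⁻¹efe⁻¹, together with the relations aba = bab, efe = fef, dxd⁻¹ = xb, dbd⁻¹ = x⁻¹, szs⁻¹ = zf, sfs⁻¹ = z⁻¹, ab²ab⁻⁴ = [d,y], ef²ef⁻⁴ = [s,t], [x,b] = [z,f], and relators lying in the normal closure of [x,b], is the trivial group. -/

import Mathlib

open scoped commutatorElement

/-- Generators: `a=0, b=1, x=2, d=3, y=4, e=5, f=6, z=7, s=8, t=9`. The listed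
relations of the presentation of `π₁(X_K)`. -/
def XKRels : Set (FreeGroup (Fin 10)) :=
  letI a : FreeGroup (Fin 10) := FreeGroup.of 0
  letI b : FreeGroup (Fin 10) := FreeGroup.of 1
  letI x : FreeGroup (Fin 10) := FreeGroup.of 2
  letI d : FreeGroup (Fin 10) := FreeGroup.of 3
  letI y : FreeGroup (Fin 10) := FreeGroup.of 4
  letI e : FreeGroup (Fin 10) := FreeGroup.of 5
  letI f : FreeGroup (Fin 10) := FreeGroup.of 6
  letI z : FreeGroup (Fin 10) := FreeGroup.of 7
  letI s : FreeGroup (Fin 10) := FreeGroup.of 8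
  letI t : FreeGroup (Fin 10) := FreeGroup.of 9
  { a * b * a * (b * a * b)⁻¹,
    e * f * e * (f * e * f)⁻¹,
    d * x * d⁻¹ * (x * b)⁻¹,
    d * b * d⁻¹ * (x⁻¹)⁻¹,
    s * z * s⁻¹ * (z * f)⁻¹,
    s * f * s⁻¹ * (z⁻¹)⁻¹,
    a * b ^ 2 * a * b ^ (-4 : ℤ) * ⁅d, y⁆⁻¹,
    e * f ^ 2 * e * f ^ (-4 : ℤ) * ⁅s, t⁆⁻¹,
    ⁅x, b⁆ * ⁅z, f⁆⁻¹,
    d * (e⁻¹ * f)⁻¹,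
    y * (f⁻¹ * e * f * e⁻¹)⁻¹,
    a⁻¹ * b * s⁻¹,
    b⁻¹ * a * b * a⁻¹ * t⁻¹ }


private theorem xk_aux {H : Type*} [CommGroup H] (A B X D Y E F Z S T : H)
    (h1 : A * B * A * (B * A * B)⁻¹ = 1)
    (h2 : E * F * E * (F * E * F)⁻¹ = 1)
    (h3 : D * X * D⁻¹ * (X * B)⁻¹ = 1)
    (h4 : D * B * D⁻¹ * (X⁻¹)⁻¹ = 1)
    (h5 : S * Z * S⁻¹ * (Z * F)⁻¹ = 1)
    (h6 : S * F * S⁻¹ * (Z⁻¹)⁻¹ = 1)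
    (h10 : D * (E⁻¹ * F)⁻¹ = 1)
    (h11 : Y * (F⁻¹ * E * F * E⁻¹)⁻¹ = 1)
    (h12 : A⁻¹ * B * S⁻¹ = 1)
    (h13 : B⁻¹ * A * B * A⁻¹ * T⁻¹ = 1) :
    A = 1 ∧ B = 1 ∧ X = 1 ∧ D = 1 ∧ Y = 1 ∧ E = 1 ∧ F = 1 ∧ Z = 1 ∧ S = 1 ∧ T = 1 := by
  rw [mul_inv_eq_one] at h1 h2 h3 h4 h5 h6 h10 h11
  rw [mul_inv_cancel_comm] at h3 h4 h5 h6
  have hB : B = 1 := left_eq_mul.mp h3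
  have hX : X = 1 := inv_eq_one.mp (hB ▸ h4).symm
  have hF : F = 1 := left_eq_mul.mp h5
  have hZ : Z = 1 := inv_eq_one.mp (hF ▸ h6).symm
  have hA : A = 1 := by rw [hB] at h1; simpa using h1
  have hE : E = 1 := by rw [hF] at h2; simpa using h2
  have hD : D = 1 := by rw [hE, hF] at h10; simpa using h10
  have hY : Y = 1 := by rw [hE, hF] at h11; simpa using h11
  have hS : S = 1 := by rw [mul_inv_eq_one, hA, hB] at h12; simpa using h12.symm
  have hT : T = 1 := by rw [mul_inv_eq_one, hA, hB] at h13; simpa using h13.symm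
  exact ⟨hA, hB, hX, hD, hY, hE, hF, hZ, hS, hT⟩

/-- The abelianization of `π₁(X_K)` is trivial: for any set of extra relators
lying in the normal closure of `[x,b]`, the presented group with the relations
of `XKRels` together with these relators has trivial abelianization. -/
theorem XK_abelianization_trivial
    (R : Set (FreeGroup (Fin 10)))
    (hR : R ⊆ (Subgroup.normalClosure {⁅(FreeGroup.of 2 : FreeGroup (Fin 10)),
        FreeGroup.of 1⁆} : Subgroup (FreeGroup (Fin 10))).carrier) :
    Subsingleton (Abelianization (PresentedGroup (XKRels ∪ R))) := by
  classical
  let φ : FreeGroup (Fin 10) →* Abelianization (PresentedGroup (XKRels ∪ R)) :=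
    Abelianization.of.comp (PresentedGroup.mk (XKRels ∪ R))
  have hφ : ∀ r ∈ XKRels, φ r = 1 := by
    intro r hr
    have h : PresentedGroup.mk (XKRels ∪ R) r = 1 :=
      (QuotientGroup.eq_one_iff r).mpr (Subgroup.subset_normalClosure (Or.inl hr))
    show Abelianization.of (PresentedGroup.mk (XKRels ∪ R) r) = 1
    rw [h, map_one]
  have h1 := hφ ((FreeGroup.of 0) * (FreeGroup.of 1) * (FreeGroup.of 0) * ((FreeGroup.of 1) * (FreeGroup.of 0) * (FreeGroup.of 1))⁻¹) (show _ ∈ XKRels from Set.mem_insert _ _)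
  have h2 := hφ ((FreeGroup.of 5) * (FreeGroup.of 6) * (FreeGroup.of 5) * ((FreeGroup.of 6) * (FreeGroup.of 5) * (FreeGroup.of 6))⁻¹) (show _ ∈ XKRels from Set.mem_insert_of_mem _ (Set.mem_insert _ _))
  have h3 := hφ ((FreeGroup.of 3) * (FreeGroup.of 2) * (FreeGroup.of 3)⁻¹ * ((FreeGroup.of 2) * (FreeGroup.of 1))⁻¹) (show _ ∈ XKRels from Set.mem_insert_of_mem _ (Set.mem_insert_of_mem _ (Set.mem_insert _ _)))
  have h4 := hφ ((FreeGroup.of 3) * (FreeGroup.of 1) * (FreeGroup.of 3)⁻¹ * ((FreeGroup.of 2)⁻¹)⁻¹) (show _ ∈ XKRels from Set.mem_insert_of_mem _ (Set.mem_insert_of_mem _ (Set.mem_insert_of_mem _ (Set.mem_insert _ _))))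
  have h5 := hφ ((FreeGroup.of 8) * (FreeGroup.of 7) * (FreeGroup.of 8)⁻¹ * ((FreeGroup.of 7) * (FreeGroup.of 6))⁻¹) (show _ ∈ XKRels from Set.mem_insert_of_mem _ (Set.mem_insert_of_mem _ (Set.mem_insert_of_mem _ (Set.mem_insert_of_mem _ (Set.mem_insert _ _)))))
  have h6 := hφ ((FreeGroup.of 8) * (FreeGroup.of 6) * (FreeGroup.of 8)⁻¹ * ((FreeGroup.of 7)⁻¹)⁻¹) (show _ ∈ XKRels from Set.mem_insert_of_mem _ (Set.mem_insert_of_mem _ (Set.mem_insert_of_mem _ (Set.mem_insert_of_mem _ (Set.mem_insert_of_mem _ (Set.mem_insert _ _))))))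
  have h10 := hφ ((FreeGroup.of 3) * ((FreeGroup.of 5)⁻¹ * (FreeGroup.of 6))⁻¹) (show _ ∈ XKRels from Set.mem_insert_of_mem _ (Set.mem_insert_of_mem _ (Set.mem_insert_of_mem _ (Set.mem_insert_of_mem _ (Set.mem_insert_of_mem _ (Set.mem_insert_of_mem _ (Set.mem_insert_of_mem _ (Set.mem_insert_of_mem _ (Set.mem_insert_of_mem _ (Set.mem_insert _ _))))))))))
  have h11 := hφ ((FreeGroup.of 4) * ((FreeGroup.of 6)⁻¹ * (FreeGroup.of 5) * (FreeGroup.of 6) * (FreeGroup.of 5)⁻¹)⁻¹) (show _ ∈ XKRels from Set.mem_insert_of_mem _ (Set.mem_insert_of_mem _ (Set.mem_insert_of_mem _ (Set.mem_insert_of_mem _ (Set.mem_insert_of_mem _ (Set.mem_insert_of_mem _ (Set.mem_insert_of_mem _ (Set.mem_insert_of_mem _ (Set.mem_insert_of_mem _ (Set.mem_insert_of_mem _ (Set.mem_insert _ _)))))))))))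
  have h12 := hφ ((FreeGroup.of 0)⁻¹ * (FreeGroup.of 1) * (FreeGroup.of 8)⁻¹) (show _ ∈ XKRels from Set.mem_insert_of_mem _ (Set.mem_insert_of_mem _ (Set.mem_insert_of_mem _ (Set.mem_insert_of_mem _ (Set.mem_insert_of_mem _ (Set.mem_insert_of_mem _ (Set.mem_insert_of_mem _ (Set.mem_insert_of_mem _ (Set.mem_insert_of_mem _ (Set.mem_insert_of_mem _ (Set.mem_insert_of_mem _ (Set.mem_insert _ _))))))))))))
  have h13 := hφ ((FreeGroup.of 1)⁻¹ * (FreeGroup.of 0) * (FreeGroup.of 1) * (FreeGroup.of 0)⁻¹ * (FreeGroup.of 9)⁻¹) (show _ ∈ XKRels from Set.mem_insert_of_mem _ (Set.mem_insert_of_mem _ (Set.mem_insert_of_mem _ (Set.mem_insert_of_mem _ (Set.mem_insert_of_mem _ (Set.mem_insert_of_mem _ (Set.mem_insert_of_mem _ (Set.mem_insert_of_mem _ (Set.mem_insert_of_mem _ (Set.mem_insert_of_mem _ (Set.mem_insert_of_mem _ (Set.mem_insert_of_mem _ (Set.mem_singleton _)))))))))))))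
  simp only [map_mul, map_inv] at h1 h2 h3 h4 h5 h6 h10 h11 h12 h13
  obtain ⟨hA, hB, hX, hD, hY, hE, hF, hZ, hS, hT⟩ :=
    xk_aux (φ (FreeGroup.of 0)) (φ (FreeGroup.of 1)) (φ (FreeGroup.of 2)) (φ (FreeGroup.of 3)) (φ (FreeGroup.of 4)) (φ (FreeGroup.of 5)) (φ (FreeGroup.of 6)) (φ (FreeGroup.of 7)) (φ (FreeGroup.of 8)) (φ (FreeGroup.of 9))
      h1 h2 h3 h4 h5 h6 h10 h11 h12 h13
  have hφ1 : φ = 1 := by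
    apply FreeGroup.ext_hom
    intro i
    fin_cases i
    · exact hA
    · exact hB
    · exact hX
    · exact hD
    · exact hY
    · exact hE
    · exact hF
    · exact hZ
    · exact hS
    · exact hT
  refine ⟨fun g h => ?_⟩
  have key : ∀ g : Abelianization (PresentedGroup (XKRels ∪ R)), g = 1 := by
    intro g
    induction g using Quotient.inductionOn' with
    | h p =>
      induction p using PresentedGroup.induction_on with
      | H w => exact (show φ w = 1 by rw [hφ1]; rfl)
  rw [key g, key h]
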